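/- arXiv:1904.05121 — 3 statements merged into one kernel-verified Lean document; each statement's English description precedes it below -/
import Mathlib

section
/- Let N_T, N_A, N_U be natural numbers with N_T ≥ 2, N_A ≥ 1, N_U ≥ 1 and N_A·N_U ≥ 2, and define α_max = min(N_A·N_U, ⌊N_A·N_U·(N_T − 1)/(N_A·N_U − 1)⌋). Then α_max = N_T if N_A·N_U = N_T; α_max = N_T − 1 if N_A·N_U > N_T; and α_max = N_A·N_U if N_A·N_U < N_T. -/
lemma aux (M N_T : ℕ) (hT : 2 ≤ N_T) (hM : 2 ≤ M) :
    (M = N_T → min M (M * (N_T - 1) / (M - 1)) = N_T) ∧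
    (M > N_T → min M (M * (N_T - 1) / (M - 1)) = N_T - 1) ∧
    (M < N_T → min M (M * (N_T - 1) / (M - 1)) = M) := by
  refine ⟨?_, ?_, ?_⟩
  · rintro rfl
    have : M * (M - 1) / (M - 1) = M := Nat.mul_div_cancel M (by omega)
    rw [this]; omega
  · intro h
    have hM' : M = (M - 1) + 1 := by omega
    have hq : M * (N_T - 1) / (M - 1) = N_T - 1 := by
      have hkey : M * (N_T - 1) = (M - 1) * (N_T - 1) + (N_T - 1) := by
        conv_lhs => rw [hM']
        ring
      rw [hkey, Nat.mul_add_div (by omega : 0 < M - 1),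
        Nat.div_eq_of_lt (by omega), Nat.add_zero]
    rw [hq]; omega
  · intro h
    have hle : M ≤ M * (N_T - 1) / (M - 1) := by
      rw [Nat.le_div_iff_mul_le (by omega)]
      have : M * (M - 1) ≤ M * (N_T - 1) := Nat.mul_le_mul_left M (by omega)
      omega
    omega

/-- Multiuser extension (eq. (51)): for `N_T ≥ 2`, `N_A ≥ 1`, `N_U ≥ 1`, `N_A * N_U ≥ 2`, let
`α_max = min (N_A * N_U) ⌊N_A * N_U * (N_T - 1) / (N_A * N_U - 1)⌋`. Then `α_max = N_T` if
`N_A * N_U = N_T`, `α_max = N_T - 1` if `N_A * N_U > N_T`, and `α_max = N_A * N_U` otherwise. -/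
theorem stmt_2 (N_T N_A N_U : ℕ) (hT : 2 ≤ N_T) (hA : 1 ≤ N_A) (hU : 1 ≤ N_U)
    (hAU : 2 ≤ N_A * N_U) :
    (N_A * N_U = N_T →
      min (N_A * N_U) (N_A * N_U * (N_T - 1) / (N_A * N_U - 1)) = N_T) ∧
    (N_A * N_U > N_T →
      min (N_A * N_U) (N_A * N_U * (N_T - 1) / (N_A * N_U - 1)) = N_T - 1) ∧
    (N_A * N_U < N_T →
      min (N_A * N_U) (N_A * N_U * (N_T - 1) / (N_A * N_U - 1)) = N_A * N_U) := by
  exact aux _ _ hT hAU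
end

section
/- Let N_T and K be natural numbers, let h ∈ ℂ^{N_T} (EuclideanSpace ℂ (Fin N_T)) be nonzero, and let g₁, …, g_K ∈ ℂ^{N_T}. For each real N₀ > 0, suppose w(N₀) ∈ ℂ^{N_T} satisfies ‖w(N₀)‖ = 1 and, for every v with ‖v‖ = 1, |⟨h, v⟩|²/(∑_{k=1}^{K} |⟨g_k, v⟩|² + N₀) ≤ |⟨h, w(N₀)⟩|²/(∑_{k=1}^{K} |⟨g_k, w(N₀)⟩|² + N₀). Then |⟨h, w(N₀)⟩|² tends to ‖h‖² as N₀ → ∞. -/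
/-!
Testing the maximizer against the matched filter `v = h / ‖h‖` gives
`‖h‖² / (L + N₀) ≤ |⟨h, w⟩|² / (S + N₀)`, where `L, S ≥ 0` are the leakages of `v` and `w`,
hence `‖h‖² · N₀ / (L + N₀) ≤ |⟨h, w⟩|² ≤ ‖h‖²` by Cauchy–Schwarz. The lower bound tends to
`‖h‖²` because `L` does not depend on `N₀`.
-/

open Filter Topology

section

variable {𝕜 E : Type*} [RCLike 𝕜] [NormedAddCommGroup E] [InnerProductSpace 𝕜 E]

theorem norm_inner_sq_le_of_norm_eq_one (h : E) {w : E} (hw : ‖w‖ = 1) :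
    ‖(inner 𝕜 h w : 𝕜)‖ ^ 2 ≤ ‖h‖ ^ 2 := by
  gcongr
  simpa [hw] using norm_inner_le_norm (𝕜 := 𝕜) h w

theorem exists_norm_eq_one_norm_inner_eq_norm {h : E} (hh : h ≠ 0) :
    ∃ v : E, ‖v‖ = 1 ∧ ‖(inner 𝕜 h v : 𝕜)‖ = ‖h‖ := by
  refine ⟨(‖h‖⁻¹ : 𝕜) • h, norm_smul_inv_norm hh, ?_⟩
  rw [inner_smul_right, inner_self_eq_norm_sq_to_K, norm_mul, norm_inv, norm_pow,
    RCLike.norm_ofReal, abs_norm]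
  field_simp

end

theorem tendsto_div_const_add_atTop (L : ℝ) :
    Tendsto (fun x : ℝ => x / (L + x)) atTop (𝓝 1) := by
  have : Tendsto (fun x : ℝ => 1 / (L * x⁻¹ + 1)) atTop (𝓝 (1 / (L * 0 + 1))) :=
    tendsto_const_nhds.div ((tendsto_inv_atTop_zero.const_mul L).add_const 1) (by simp)
  rw [mul_zero, zero_add, div_one] at this
  refine this.congr' ?_
  filter_upwards [eventually_gt_atTop 0] with x hx
  field_simp

theorem mul_div_add_le_of_div_add_le_div_add {a b L S N : ℝ} (ha : 0 ≤ a) (hL : 0 ≤ L)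
    (hS : 0 ≤ S) (hN : 0 < N) (hab : a / (L + N) ≤ b / (S + N)) :
    a * (N / (L + N)) ≤ b := by
  rw [div_le_div_iff₀ (by linarith) (by linarith)] at hab
  rw [mul_div_assoc', div_le_iff₀ (by linarith)]
  nlinarith

theorem stmt_4_general (N_T K : ℕ) (h : EuclideanSpace ℂ (Fin N_T))
    (g : Fin K → EuclideanSpace ℂ (Fin N_T))
    (w : ℝ → EuclideanSpace ℂ (Fin N_T))
    (hw_norm : ∀ N₀ : ℝ, 0 < N₀ → ‖w N₀‖ = 1)
    (hw_max : ∀ N₀ : ℝ, 0 < N₀ → ∀ v : EuclideanSpace ℂ (Fin N_T), ‖v‖ = 1 →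
      ‖(inner ℂ h v : ℂ)‖ ^ 2 / (∑ k : Fin K, ‖(inner ℂ (g k) v : ℂ)‖ ^ 2 + N₀) ≤
        ‖(inner ℂ h (w N₀) : ℂ)‖ ^ 2 / (∑ k : Fin K, ‖(inner ℂ (g k) (w N₀) : ℂ)‖ ^ 2 + N₀)) :
    Tendsto (fun N₀ : ℝ => ‖(inner ℂ h (w N₀) : ℂ)‖ ^ 2) atTop (nhds (‖h‖ ^ 2)) := by
  rcases eq_or_ne h 0 with rfl | hh
  · simp
  obtain ⟨v, hv_norm, hv_inner⟩ := exists_norm_eq_one_norm_inner_eq_norm (𝕜 := ℂ) hh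
  set L := ∑ k : Fin K, ‖(inner ℂ (g k) v : ℂ)‖ ^ 2
  have lower : Tendsto (fun N₀ : ℝ => ‖h‖ ^ 2 * (N₀ / (L + N₀))) atTop (𝓝 (‖h‖ ^ 2)) := by
    simpa using (tendsto_div_const_add_atTop L).const_mul (‖h‖ ^ 2)
  refine tendsto_of_tendsto_of_tendsto_of_le_of_le' lower tendsto_const_nhds ?_ ?_
  · filter_upwards [eventually_gt_atTop 0] with N₀ hN₀
    have hmax := hw_max N₀ hN₀ v hv_norm
    rw [hv_inner] at hmax
    exact mul_div_add_le_of_div_add_le_div_add (sq_nonneg _)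
      (Finset.sum_nonneg fun _ _ => sq_nonneg _) (Finset.sum_nonneg fun _ _ => sq_nonneg _) hN₀ hmax
  · filter_upwards [eventually_gt_atTop 0] with N₀ hN₀
    exact norm_inner_sq_le_of_norm_eq_one h (hw_norm N₀ hN₀)

/-- Low-SNR step of Theorem 1: if `w N₀` is a unit-norm maximizer of the WSLNR
`|⟨h, v⟩|² / (∑ k, |⟨g k, v⟩|² + N₀)` for each noise level `N₀ > 0`, then the achieved
desired channel gain `|⟨h, w N₀⟩|²` tends to `‖h‖²` as `N₀ → ∞`. -/
theorem stmt_4 (N_T K : ℕ) (h : EuclideanSpace ℂ (Fin N_T)) (hh : h ≠ 0)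
    (g : Fin K → EuclideanSpace ℂ (Fin N_T))
    (w : ℝ → EuclideanSpace ℂ (Fin N_T))
    (hw_norm : ∀ N₀ : ℝ, 0 < N₀ → ‖w N₀‖ = 1)
    (hw_max : ∀ N₀ : ℝ, 0 < N₀ → ∀ v : EuclideanSpace ℂ (Fin N_T), ‖v‖ = 1 →
      ‖(inner ℂ h v : ℂ)‖ ^ 2 / (∑ k : Fin K, ‖(inner ℂ (g k) v : ℂ)‖ ^ 2 + N₀) ≤
        ‖(inner ℂ h (w N₀) : ℂ)‖ ^ 2 / (∑ k : Fin K, ‖(inner ℂ (g k) (w N₀) : ℂ)‖ ^ 2 + N₀)) :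
    Tendsto (fun N₀ : ℝ => ‖(inner ℂ h (w N₀) : ℂ)‖ ^ 2) atTop (nhds (‖h‖ ^ 2)) :=
  stmt_4_general N_T K h g w hw_norm hw_max
end

section
/- Let n be a natural number with n ≥ 2 and let N₀ > 0 be a real number. Then ∫₀^∞ x^{n−2}·e^{−x/2} / ((x + N₀)·2^{n−1}·(n−2)!) dx = e^{N₀/2} · 2^{1−n} · N₀^{n−2} · ∫_{N₀/2}^∞ t^{1−n}·e^{−t} dt. -/
/-!
Write `I_k = ∫₀^∞ x^k e^{-bx} / (x + c) dx`. The substitution `t = b (x + c)` gives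
`I_0 = e^{bc} Γ(0, bc)`, and `x^{k+1} / (x + c) = x^k - c x^k / (x + c)` gives
`I_{k+1} = k! / b^{k+1} - c I_k`. The recursion `Γ(s + 1, a) = a^s e^{-a} + s Γ(s, a)` of the
upper incomplete gamma function, proved by integration by parts, then shows by induction that
`I_k = e^{bc} k! c^k Γ(-k, bc)`. The theorem is the case `b = 1/2`, `c = N₀`, `k = n - 2`.
-/

open MeasureTheory Set Real Filter Asymptotics Nat

/-- `Γ(s, a)`. The integral diverges when `a ≤ 0` and `s ≤ 0`, and is then the junk value `0`. -/
noncomputable def upperIncompleteGamma (s a : ℝ) : ℝ :=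
  ∫ t in Ioi a, t ^ (s - 1) * exp (-t)

theorem integrableOn_rpow_mul_exp_neg_Ioi (s : ℝ) {a : ℝ} (ha : 0 < a) :
    IntegrableOn (fun t : ℝ => t ^ s * exp (-t)) (Ioi a) := by
  refine integrable_of_isBigO_exp_neg one_half_pos ?_ ?_
  · refine ContinuousOn.mul (fun t ht => ?_) (continuous_exp.comp continuous_neg).continuousOn
    exact (continuousAt_rpow_const t s (Or.inl (ha.trans_le ht).ne')).continuousWithinAt
  · simpa only [mul_comm] using (Gamma_integrand_isLittleO s).isBigO

theorem upperIncompleteGamma_add_one (s : ℝ) {a : ℝ} (ha : 0 < a) :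
    upperIncompleteGamma (s + 1) a = a ^ s * exp (-a) + s * upperIncompleteGamma s a := by
  have ftc := integral_Ioi_of_hasDerivAt_of_tendsto' (a := a) (m := 0)
    (f := fun t => -(t ^ s * exp (-t)))
    (f' := fun t => t ^ s * exp (-t) - s * (t ^ (s - 1) * exp (-t)))
    (fun t ht => by
      have ht0 : t ≠ 0 := (ha.trans_le ht).ne'
      exact (((hasDerivAt_rpow_const (Or.inl ht0)).mul
        (hasDerivAt_neg t).exp).fun_neg).congr_deriv (by ring))
    ((integrableOn_rpow_mul_exp_neg_Ioi s ha).sub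
      ((integrableOn_rpow_mul_exp_neg_Ioi (s - 1) ha).const_mul s))
    (by simpa using (tendsto_rpow_mul_exp_neg_mul_atTop_nhds_zero s 1 one_pos).neg)
  rw [integral_sub (integrableOn_rpow_mul_exp_neg_Ioi s ha)
    ((integrableOn_rpow_mul_exp_neg_Ioi (s - 1) ha).const_mul s), integral_const_mul] at ftc
  rw [upperIncompleteGamma, upperIncompleteGamma, add_sub_cancel_right]
  linarith

theorem integrableOn_pow_mul_exp_neg_mul (k : ℕ) {b : ℝ} (hb : 0 < b) :
    IntegrableOn (fun x : ℝ => x ^ k * exp (-(b * x))) (Ioi 0) := by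
  refine (integrableOn_rpow_mul_exp_neg_mul_rpow (s := k) (p := 1)
    (neg_one_lt_zero.trans_le k.cast_nonneg) one_pos hb).congr_fun (fun x _ => ?_) measurableSet_Ioi
  simp [rpow_natCast]

theorem integral_pow_mul_exp_neg_mul (k : ℕ) {b : ℝ} (hb : 0 < b) :
    ∫ x in Ioi 0, x ^ k * exp (-(b * x)) = k ! / b ^ (k + 1) := by
  have h := integral_rpow_mul_exp_neg_mul_Ioi (a := k + 1) (by positivity) hb
  rw [add_sub_cancel_right, Gamma_nat_eq_factorial, one_div, inv_rpow hb.le,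
    ← Nat.cast_add_one, rpow_natCast] at h
  simpa [rpow_natCast, div_eq_inv_mul] using h

theorem integrableOn_pow_mul_exp_neg_mul_div_add (k : ℕ) {b c : ℝ} (hb : 0 < b) (hc : 0 < c) :
    IntegrableOn (fun x : ℝ => x ^ k * exp (-(b * x)) / (x + c)) (Ioi 0) := by
  refine ((integrableOn_pow_mul_exp_neg_mul k hb).div_const c).mono'
    (Measurable.aestronglyMeasurable (by fun_prop)) ?_
  filter_upwards [ae_restrict_mem measurableSet_Ioi] with x (hx : 0 < x)
  rw [norm_of_nonneg (by positivity)]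
  gcongr
  linarith

theorem integral_exp_neg_mul_div_add {b c : ℝ} (hb : 0 < b) (hc : 0 < c) :
    ∫ x in Ioi 0, exp (-(b * x)) / (x + c) = exp (b * c) * upperIncompleteGamma 0 (b * c) := by
  have himage : (fun x => b * (x + c)) '' Ioi 0 = Ioi (b * c) := by
    ext t
    refine ⟨?_, fun (ht : b * c < t) => ⟨t / b - c, ?_, ?_⟩⟩
    · rintro ⟨x, hx : 0 < x, rfl⟩
      exact mem_Ioi.2 (by nlinarith)
    · exact mem_Ioi.2 (by rw [sub_pos, lt_div_iff₀ hb]; linarith)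
    · field_simp; ring
  have subst := integral_image_eq_integral_abs_deriv_smul (s := Ioi 0) measurableSet_Ioi
    (f := fun x => b * (x + c)) (f' := fun _ => b)
    (fun x _ => by simpa using (((hasDerivAt_id x).add_const c).const_mul b).hasDerivWithinAt)
    (fun x _ y _ h => by simpa [hb.ne'] using h) (fun t => t ^ ((0 : ℝ) - 1) * exp (-t))
  rw [himage] at subst
  rw [upperIncompleteGamma, subst, ← integral_const_mul]
  refine setIntegral_congr_fun measurableSet_Ioi fun x (hx : 0 < x) => ?_
  have hxc : 0 < x + c := by linarith
  rw [zero_sub, rpow_neg_one, smul_eq_mul, abs_of_pos hb]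
  field_simp
  rw [← exp_add]
  ring_nf

theorem integral_pow_mul_exp_neg_mul_div_add (k : ℕ) {b c : ℝ} (hb : 0 < b) (hc : 0 < c) :
    ∫ x in Ioi 0, x ^ k * exp (-(b * x)) / (x + c) =
      exp (b * c) * k ! * c ^ k * upperIncompleteGamma (-k) (b * c) := by
  induction k with
  | zero => simpa using integral_exp_neg_mul_div_add hb hc
  | succ k ih =>
    have hsplit : ∫ x in Ioi 0, x ^ (k + 1) * exp (-(b * x)) / (x + c) =
        ∫ x in Ioi 0, x ^ k * exp (-(b * x)) - c * (x ^ k * exp (-(b * x)) / (x + c)) := by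
      refine setIntegral_congr_fun measurableSet_Ioi fun x (hx : 0 < x) => ?_
      have : x + c ≠ 0 := by positivity
      field_simp
      ring
    have hrec : ((k : ℝ) + 1) * upperIncompleteGamma (-(k + 1 : ℕ)) (b * c) =
        ((b * c) ^ (k + 1))⁻¹ * exp (-(b * c)) - upperIncompleteGamma (-k) (b * c) := by
      have h := upperIncompleteGamma_add_one (-(k + 1 : ℕ)) (mul_pos hb hc)
      rw [show (-(k + 1 : ℕ) : ℝ) + 1 = -k by push_cast; ring, rpow_neg (by positivity),
        rpow_natCast] at h
      push_cast at h ⊢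
      linarith
    rw [hsplit, integral_sub (integrableOn_pow_mul_exp_neg_mul k hb)
      ((integrableOn_pow_mul_exp_neg_mul_div_add k hb hc).const_mul c), integral_const_mul,
      integral_pow_mul_exp_neg_mul k hb, ih,
      show exp (b * c) * ((k + 1)! : ℕ) * c ^ (k + 1) * upperIncompleteGamma (-(k + 1 : ℕ)) (b * c)
        = exp (b * c) * k ! * c ^ (k + 1) *
          (((k : ℝ) + 1) * upperIncompleteGamma (-(k + 1 : ℕ)) (b * c)) by
        push_cast [factorial_succ]; ring,
      hrec, exp_neg, mul_pow]
    field_simp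
    ring

/-- Expectation computation (eq. (46)) in Lemma 3: for `n ≥ 2` and `N₀ > 0`,
`∫₀^∞ x^(n-2) e^(-x/2) / ((x + N₀) 2^(n-1) (n-2)!) dx
  = e^(N₀/2) 2^(1-n) N₀^(n-2) ∫_{N₀/2}^∞ t^(1-n) e^(-t) dt`. -/
theorem stmt_7 (n : ℕ) (hn : 2 ≤ n) (N₀ : ℝ) (hN₀ : 0 < N₀) :
    ∫ x in Set.Ioi (0 : ℝ),
        x ^ (n - 2) * Real.exp (-x / 2) /
          ((x + N₀) * 2 ^ (n - 1) * (Nat.factorial (n - 2) : ℝ)) =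
      Real.exp (N₀ / 2) * (2 : ℝ) ^ ((1 : ℤ) - n) * N₀ ^ (n - 2) *
        ∫ t in Set.Ioi (N₀ / 2), t ^ ((1 : ℤ) - n) * Real.exp (-t) := by
  obtain ⟨k, rfl⟩ : ∃ k, n = k + 2 := ⟨n - 2, by omega⟩
  have hgamma : ∫ t in Ioi (N₀ / 2), t ^ ((1 : ℤ) - (k + 2 : ℕ)) * exp (-t) =
      upperIncompleteGamma (-k) (2⁻¹ * N₀) := by
    rw [upperIncompleteGamma, inv_mul_eq_div]
    refine setIntegral_congr_fun measurableSet_Ioi fun t _ => ?_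
    rw [← rpow_intCast]
    push_cast
    ring_nf
  have hlhs : ∫ x in Ioi 0, x ^ k * exp (-x / 2) / ((x + N₀) * 2 ^ (k + 1) * k !) =
      (∫ x in Ioi 0, x ^ k * exp (-(2⁻¹ * x)) / (x + N₀)) / (2 ^ (k + 1) * k !) := by
    rw [← integral_div]
    refine setIntegral_congr_fun measurableSet_Ioi fun x _ => ?_
    rw [div_div, ← mul_assoc, neg_div, inv_mul_eq_div]
  rw [show k + 2 - 2 = k by omega, show k + 2 - 1 = k + 1 by omega, hlhs, hgamma,
    integral_pow_mul_exp_neg_mul_div_add k (by norm_num) hN₀,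
    show (1 : ℤ) - (k + 2 : ℕ) = -(k + 1 : ℕ) by push_cast; ring, zpow_neg, zpow_natCast,
    inv_mul_eq_div]
  field_simp
end
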